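/- Simulation of fireball steps in the value substitution calculus: for ES-free terms t, u, (1) if t →βλ u then t →m →eλ u; (2) if t →βi u then there exists a clean vsub-term s with t →m ≡ s and unfold(s) = u. -/
import Mathlib


/-- Terms of the value substitution calculus, in de Bruijn notation:
variables, abstractions, applications and explicit substitutions
(`sub t u` is `t[x←u]`, binding de Bruijn index 0 of `t`). -/
inductive VTm : Type
  | var : Nat → VTm
  | lam : VTm → VTm
  | app : VTm → VTm → VTm
  | sub : VTm → VTm → VTm

namespace VTm

/-- Shift (by one) the free de Bruijn indices `≥ k`. -/
def shift (k : Nat) : VTm → VTm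
  | var n => if k ≤ n then var (n+1) else var n
  | lam t => lam (shift (k+1) t)
  | app t u => app (shift k t) (shift k u)
  | sub t u => sub (shift (k+1) t) (shift k u)

/-- Capture-avoiding (meta-level) substitution of `u` for variable `k`. -/
def subst : VTm → Nat → VTm → VTm
  | var n, k, u => if n = k then u else if k < n then var (n-1) else var n
  | lam t, k, u => lam (subst t (k+1) (shift 0 u))
  | app t s, k, u => app (subst t k u) (subst s k u)
  | sub t s, k, u => sub (subst t (k+1) (shift 0 u)) (subst s k u)

/-- vsub-values: variables and abstractions. -/
inductive IsVal : VTm → Prop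
  | var : IsVal (var n)
  | lam : IsVal (lam t)

/-- Multiplicative root rule `L⟨λx.t⟩u ↦m L⟨t[x←u]⟩` (the recursion on the
substitution context `L` performs the de Bruijn shifts corresponding to the
side condition that the variables bound by `L` do not occur free in `u`). -/
inductive RootM : VTm → VTm → Prop
  | beta : RootM (app (lam t) u) (sub t u)
  | under : RootM (app t (shift 0 u)) s → RootM (app (sub t r) u) (sub s r)

/-- Exponential root rule `t[x←L⟨v⟩] ↦e L⟨t{x:=v}⟩` for an abstraction `v`. -/
inductive RootEAbs : VTm → VTm → Prop
  | beta : RootEAbs (sub t (lam u)) (subst t 0 (lam u))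
  | under : RootEAbs (sub (shift 1 t) b) s → RootEAbs (sub t (sub b r)) (sub s r)

/-- Exponential root rule `t[x←L⟨v⟩] ↦e L⟨t{x:=v}⟩` for a variable `v`. -/
inductive RootEVar : VTm → VTm → Prop
  | beta : RootEVar (sub t (var n)) (subst t 0 (var n))
  | under : RootEVar (sub (shift 1 t) b) s → RootEVar (sub t (sub b r)) (sub s r)

/-- Closure of a root rule under the weak evaluation contexts
`E ::= ⟨·⟩ | t E | E t | E[x←u] | t[x←E]`. -/
inductive Clo (R : VTm → VTm → Prop) : VTm → VTm → Prop
  | root : R t u → Clo R t u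
  | appL : Clo R t t' → Clo R (app t u) (app t' u)
  | appR : Clo R u u' → Clo R (app t u) (app t u')
  | subL : Clo R t t' → Clo R (sub t u) (sub t' u)
  | subR : Clo R u u' → Clo R (sub t u) (sub t u')

/-- Multiplicative reduction `→m`. -/
def StepM : VTm → VTm → Prop := Clo RootM
/-- Abstraction-exponential reduction `→eλ`. -/
def StepEAbs : VTm → VTm → Prop := Clo RootEAbs
/-- Variable-exponential reduction `→evar`. -/
def StepEVar : VTm → VTm → Prop := Clo RootEVar
/-- Exponential reduction `→e = →eλ ∪ →evar`. -/
def StepE (t u : VTm) : Prop := StepEAbs t u ∨ StepEVar t u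
/-- vsub-reduction `→vsub = →m ∪ →e`. -/
def StepVsub (t u : VTm) : Prop := StepM t u ∨ StepE t u

/-- Swap the de Bruijn indices `k` and `k+1`. -/
def swap (k : Nat) : VTm → VTm
  | var n => if n = k then var (k+1) else if n = k+1 then var k else var n
  | lam t => lam (swap (k+1) t)
  | app t u => app (swap k t) (swap k u)
  | sub t u => sub (swap (k+1) t) (swap k u)

/-- Structural equivalence `≡`: least equivalence relation closed under
evaluation contexts generated by the four permutation axioms for explicit
substitutions (the de Bruijn shifts/swaps implement the freshness side
conditions). -/
inductive SEq : VTm → VTm → Prop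
  | com : SEq (sub (sub t (shift 0 s)) u) (sub (sub (swap 0 t) (shift 0 u)) s)
  | apR : SEq (app t (sub s u)) (sub (app (shift 0 t) s) u)
  | apL : SEq (app (sub t u) s) (sub (app t (shift 0 s)) u)
  | es  : SEq (sub t (sub u s)) (sub (sub (shift 1 t) u) s)
  | refl : SEq t t
  | symm : SEq t u → SEq u t
  | trans : SEq t u → SEq u s → SEq t s
  | appL : SEq t t' → SEq (app t u) (app t' u)
  | appR : SEq u u' → SEq (app t u) (app t u')
  | subL : SEq t t' → SEq (sub t u) (sub t' u)
  | subR : SEq u u' → SEq (sub t u) (sub t u')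

/-- Terms without explicit substitutions. -/
def NoES : VTm → Prop
  | var _ => True
  | lam t => NoES t
  | app t u => NoES t ∧ NoES u
  | sub _ _ => False

end VTm
open VTm

mutual
/-- Inert terms: `i ::= x | i f`. -/
inductive Inert : VTm → Prop
  | var : Inert (.var n)
  | app : Inert i → Fireball f → Inert (.app i f)
/-- Fireballs: `f ::= λx.t | i`. -/
inductive Fireball : VTm → Prop
  | lam : Fireball (.lam t)
  | inert : Inert i → Fireball i
end

/-- Fireball-calculus abstraction steps `→βλ` (weak contexts). -/
inductive StepBL : VTm → VTm → Prop
  | beta : StepBL (.app (.lam t) (.lam u)) (subst t 0 (.lam u))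
  | appL : StepBL t t' → StepBL (.app t u) (.app t' u)
  | appR : StepBL u u' → StepBL (.app t u) (.app t u')

/-- Fireball-calculus inert steps `→βi` (weak contexts). -/
inductive StepBI : VTm → VTm → Prop
  | beta : Inert i → StepBI (.app (.lam t) i) (subst t 0 i)
  | appL : StepBI t t' → StepBI (.app t u) (.app t' u)
  | appR : StepBI u u' → StepBI (.app t u) (.app t u')

/-- Clean vsub-terms: `u[x₁←i₁]…[xₙ←iₙ]` with `u` (the body) ES-free and
each `iₖ` an ES-free inert term. -/
inductive Clean : VTm → Prop
  | base : NoES t → Clean t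
  | sub : Clean t → NoES i → Inert i → Clean (.sub t i)

/-- Unfolding: turn all explicit substitutions into meta-level substitutions. -/
def unfold : VTm → VTm
  | .var n => .var n
  | .lam t => .lam (unfold t)
  | .app t u => .app (unfold t) (unfold u)
  | .sub t u => subst (unfold t) 0 (unfold u)

lemma unfold_noES : ∀ t : VTm, NoES t → unfold t = t
  | .var _, _ => rfl
  | .lam t, h => by simp [unfold, unfold_noES t h]
  | .app t u, h => by simp [unfold, unfold_noES t h.1, unfold_noES u h.2]

lemma noES_shift : ∀ (t : VTm) (k : Nat), NoES t → NoES (shift k t)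
  | .var n, k, _ => by unfold shift; split <;> trivial
  | .lam t, k, h => noES_shift t (k+1) h
  | .app t u, k, h => ⟨noES_shift t k h.1, noES_shift u k h.2⟩

lemma subst_shift : ∀ (t : VTm) (k : Nat) (u : VTm), subst (shift k t) k u = t
  | .var n, k, u => by
    unfold shift
    split
    · have h1 : ¬ n + 1 = k := by omega
      have h2 : k < n + 1 := by omega
      simp [subst, h1, h2]
    · have h1 : ¬ n = k := by omega
      have h2 : ¬ k < n := by omega
      simp [subst, h1, h2]
  | .lam t, k, u => by simp [shift, subst, subst_shift t (k+1)]
  | .app t s, k, u => by simp [shift, subst, subst_shift t k, subst_shift s k]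
  | .sub t s, k, u => by simp [shift, subst, subst_shift t (k+1), subst_shift s k]

lemma pull_left : ∀ s : VTm, Clean s → ∀ u : VTm, NoES u →
    ∃ s', SEq (.app s u) s' ∧ Clean s' ∧ unfold s' = .app (unfold s) u := by
  intro s hs
  induction hs with
  | base h =>
    intro u hu
    exact ⟨_, SEq.refl, Clean.base ⟨h, hu⟩, by simp [unfold, unfold_noES u hu]⟩
  | @sub s0 i _ hni hii ih =>
    intro u hu
    obtain ⟨s', h1, h2, h3⟩ := ih (shift 0 u) (noES_shift u 0 hu)
    refine ⟨.sub s' i, SEq.trans SEq.apL (SEq.subL h1), Clean.sub h2 hni hii, ?_⟩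
    simp [unfold, h3, subst, subst_shift, unfold_noES i hni]

lemma pull_right : ∀ s : VTm, Clean s → ∀ u : VTm, NoES u →
    ∃ s', SEq (.app u s) s' ∧ Clean s' ∧ unfold s' = .app u (unfold s) := by
  intro s hs
  induction hs with
  | base h =>
    intro u hu
    exact ⟨_, SEq.refl, Clean.base ⟨hu, h⟩, by simp [unfold, unfold_noES u hu]⟩
  | @sub s0 i _ hni hii ih =>
    intro u hu
    obtain ⟨s', h1, h2, h3⟩ := ih (shift 0 u) (noES_shift u 0 hu)
    refine ⟨.sub s' i, SEq.trans SEq.apR (SEq.subL h1), Clean.sub h2 hni hii, ?_⟩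
    simp [unfold, h3, subst, subst_shift, unfold_noES i hni]

lemma simBL : ∀ t u : VTm, StepBL t u → ∃ s, StepM t s ∧ StepEAbs s u := by
  intro t u h
  induction h with
  | beta => exact ⟨_, Clo.root RootM.beta, Clo.root RootEAbs.beta⟩
  | appL _ ih => obtain ⟨s, h1, h2⟩ := ih; exact ⟨_, Clo.appL h1, Clo.appL h2⟩
  | appR _ ih => obtain ⟨s, h1, h2⟩ := ih; exact ⟨_, Clo.appR h1, Clo.appR h2⟩

lemma simBI : ∀ t u : VTm, NoES t → StepBI t u →
    ∃ s r, StepM t r ∧ SEq r s ∧ Clean s ∧ unfold s = u := by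
  intro t u ht h
  induction h with
  | @beta i t0 hi =>
    refine ⟨.sub t0 i, .sub t0 i, Clo.root RootM.beta, SEq.refl,
      Clean.sub (Clean.base ht.1) ht.2 hi, ?_⟩
    simp [unfold, unfold_noES t0 ht.1, unfold_noES i ht.2]
  | @appL t1 t1' u1 _ ih =>
    obtain ⟨s, r, h1, h2, h3, h4⟩ := ih ht.1
    obtain ⟨s', g1, g2, g3⟩ := pull_left s h3 u1 ht.2
    refine ⟨s', .app r u1, Clo.appL h1, SEq.trans (SEq.appL h2) g1, g2, ?_⟩
    rw [g3, h4]
  | @appR u1 u1' t1 _ ih =>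
    obtain ⟨s, r, h1, h2, h3, h4⟩ := ih ht.2
    obtain ⟨s', g1, g2, g3⟩ := pull_right s h3 t1 ht.1
    refine ⟨s', .app t1 r, Clo.appR h1, SEq.trans (SEq.appR h2) g1, g2, ?_⟩
    rw [g3, h4]

/-- simulation of fireball steps in the value substitution
calculus: a βλ-step is simulated by `→m →eλ`; a βi-step by `→m` followed by a
structural equivalence, reaching a clean term that unfolds to the target. -/
theorem fireball_simulation_in_vsub (t u : VTm) (ht : NoES t) (hu : NoES u) :
    (StepBL t u → ∃ s, StepM t s ∧ StepEAbs s u) ∧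
    (StepBI t u → ∃ s r, StepM t r ∧ SEq r s ∧ Clean s ∧ unfold s = u) := by
  exact ⟨simBL t u, simBI t u ht⟩
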